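/- Calderón–Zygmund decomposition for the dyadic ρ-localized maximal operator: let f ∈ L¹(ℝⁿ) be nonnegative, λ > 0, θ > 0, and Ω_λ = {x : M^Δ_{V,θ}f(x) > λ}. Then Ω_λ can be written as a disjoint union of dyadic cubes {Q_j} such that for each j: (i) λ < (ψ_θ(Q_j)|Q_j|)^{-1}∫_{Q_j} f, (ii) (ψ_θ(Q_j)|Q_j|)^{-1}∫_{Q_j} f ≤ (4n)^θ 2ⁿ λ; consequently (iii) f(x) ≤ λ for a.e. x ∉ ∪_j Q_j, and (iv) |Ω_λ| ≤ λ^{-1}∫_{ℝⁿ} f. -/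

import Mathlib

/-!
The cubes `Q_j` are the maximal dyadic cubes whose weighted average exceeds `λ`. Averages over
cubes of generation `k` are at most `2^{-kn} ‖f‖₁`, so every cube with average above `λ` lies in a
maximal one, and maximal cubes are disjoint because dyadic cubes are nested or disjoint. The parent
of `Q_j` has average at most `λ`, which with the consistency of `ψ_θ(Q)|Q|` under passing to the
parent gives (ii); (iv) follows by summing `|Q_j| ≤ λ⁻¹ ∫_{Q_j} f`.

For (iii), off `⋃ Q_j` the plain average of `f` over a dyadic cube `Q ∋ x` is at most `ψ_θ(Q) λ`,
and `ψ_θ(Q) → 1` as `Q` shrinks, while these averages converge to `f x` almost everywhere.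
This differentiation theorem for dyadic cubes comes from the one for balls in `Fin n → ℝ`, whose
sup metric makes closed dyadic cubes balls, transported to `EuclideanSpace` by `WithLp.ofLp`.
-/

open MeasureTheory Metric ENNReal

noncomputable section

/-- The dyadic cube of generation `k` indexed by `m`. -/
def dyadicCube {n : ℕ} (k : ℤ) (m : Fin n → ℤ) : Set (EuclideanSpace ℝ (Fin n)) :=
  {y | ∀ i, (m i : ℝ) * 2 ^ k ≤ y i ∧ y i < ((m i : ℝ) + 1) * 2 ^ k}

/-- `ψ_θ(Q) = (1 + sidelength(Q)/max_Q ρ)^θ` for a dyadic cube. -/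
def psiD {n : ℕ} (ρ : EuclideanSpace ℝ (Fin n) → ℝ) (θ : ℝ) (k : ℤ) (m : Fin n → ℤ) : ℝ :=
  (1 + (2 : ℝ) ^ k / sSup (ρ '' dyadicCube k m)) ^ θ

/-- The `ψ_θ`-weighted average of `f` over the dyadic cube `(k,m)`. -/
def avgD {n : ℕ} (ρ : EuclideanSpace ℝ (Fin n) → ℝ) (θ : ℝ) (k : ℤ) (m : Fin n → ℤ)
    (f : EuclideanSpace ℝ (Fin n) → ℝ) : ℝ≥0∞ :=
  (ENNReal.ofReal (psiD ρ θ k m) * volume (dyadicCube k m))⁻¹ *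
    ∫⁻ y in dyadicCube k m, ENNReal.ofReal (f y)

/-- The dyadic localized maximal operator `M^Δ_{V,θ}`. -/
def MDyadic {n : ℕ} (ρ : EuclideanSpace ℝ (Fin n) → ℝ) (θ : ℝ)
    (f : EuclideanSpace ℝ (Fin n) → ℝ) (x : EuclideanSpace ℝ (Fin n)) : ℝ≥0∞ :=
  ⨆ (k : ℤ) (m : Fin n → ℤ) (_ : x ∈ dyadicCube k m), avgD ρ θ k m f

open Filter Topology

section Dyadic

variable {n : ℕ}

def dyadicIndex (k : ℤ) (x : EuclideanSpace ℝ (Fin n)) : Fin n → ℤ :=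
  fun i => ⌊x i / 2 ^ k⌋

theorem mem_dyadicCube_iff {k : ℤ} {m : Fin n → ℤ} {x : EuclideanSpace ℝ (Fin n)} :
    x ∈ dyadicCube k m ↔ dyadicIndex k x = m := by
  have h2 : (0 : ℝ) < 2 ^ k := by positivity
  simp only [dyadicCube, Set.mem_ofPred_eq, funext_iff, dyadicIndex, Int.floor_eq_iff,
    le_div_iff₀ h2, div_lt_iff₀ h2]

theorem mem_dyadicCube_dyadicIndex (k : ℤ) (x : EuclideanSpace ℝ (Fin n)) :
    x ∈ dyadicCube k (dyadicIndex k x) :=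
  mem_dyadicCube_iff.mpr rfl

theorem dyadicIndex_add_natCast (k : ℤ) (d : ℕ) (x : EuclideanSpace ℝ (Fin n)) :
    dyadicIndex (k + d) x = fun i => dyadicIndex k x i / 2 ^ d := by
  funext i
  have h : x i / 2 ^ (k + d) = x i / 2 ^ k / ((2 ^ d : ℕ) : ℝ) := by
    rw [zpow_add₀ two_ne_zero, zpow_natCast, div_div, Nat.cast_pow, Nat.cast_ofNat]
  rw [dyadicIndex, h, Int.floor_div_natCast]
  norm_cast

theorem dyadicCube_subset_of_le {k k' : ℤ} {m m' : Fin n → ℤ} {x : EuclideanSpace ℝ (Fin n)}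
    (hk : k ≤ k') (hx : x ∈ dyadicCube k m) (hx' : x ∈ dyadicCube k' m') :
    dyadicCube k m ⊆ dyadicCube k' m' := by
  obtain ⟨d, rfl⟩ : ∃ d : ℕ, k' = k + d := ⟨(k' - k).toNat, by omega⟩
  intro y hy
  rw [mem_dyadicCube_iff] at hx hx' hy ⊢
  rw [← hx', dyadicIndex_add_natCast, dyadicIndex_add_natCast, hx, hy]

theorem dyadicCube_nonempty (k : ℤ) (m : Fin n → ℤ) : (dyadicCube k m).Nonempty := by
  refine ⟨WithLp.toLp 2 fun i => (m i : ℝ) * 2 ^ k, fun i => ⟨le_rfl, ?_⟩⟩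
  show (m i : ℝ) * 2 ^ k < (m i + 1) * 2 ^ k
  gcongr
  linarith

theorem exists_dyadicCube_parent (k : ℤ) (m : Fin n → ℤ) :
    ∃ m', dyadicCube k m ⊆ dyadicCube (k + 1) m' := by
  obtain ⟨x, hx⟩ := dyadicCube_nonempty k m
  exact ⟨_, dyadicCube_subset_of_le (by omega) hx (mem_dyadicCube_dyadicIndex (k + 1) x)⟩

theorem dyadicCube_eq_preimage_ofLp (k : ℤ) (m : Fin n → ℤ) :
    dyadicCube k m = WithLp.ofLp ⁻¹'
      Set.univ.pi fun i => Set.Ico ((m i : ℝ) * 2 ^ k) ((m i + 1) * 2 ^ k) := by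
  ext x
  simp [dyadicCube]

theorem measurableSet_dyadicCube (k : ℤ) (m : Fin n → ℤ) :
    MeasurableSet (dyadicCube k m) := by
  rw [dyadicCube_eq_preimage_ofLp]
  exact (MeasurableSet.univ_pi fun _ => measurableSet_Ico).preimage (by fun_prop)

theorem volume_dyadicCube (k : ℤ) (m : Fin n → ℤ) :
    volume (dyadicCube k m) = ENNReal.ofReal (2 ^ k) ^ n := by
  rw [dyadicCube_eq_preimage_ofLp, (PiLp.volume_preserving_ofLp _).measure_preimage
    (MeasurableSet.univ_pi fun _ => measurableSet_Ico).nullMeasurableSet, volume_pi_pi]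
  simp only [Real.volume_Ico, add_mul, one_mul, add_sub_cancel_left, Finset.prod_const,
    Finset.card_univ, Fintype.card_fin]

theorem volume_dyadicCube_ne_zero (k : ℤ) (m : Fin n → ℤ) :
    volume (dyadicCube k m) ≠ 0 := by
  rw [volume_dyadicCube]
  positivity

theorem volume_dyadicCube_ne_top (k : ℤ) (m : Fin n → ℤ) :
    volume (dyadicCube k m) ≠ ∞ := by
  rw [volume_dyadicCube]
  finiteness

theorem tendsto_two_zpow_neg_natCast :
    Tendsto (fun j : ℕ => (2 : ℝ) ^ (-(j : ℤ))) atTop (𝓝 0) := by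
  simpa only [zpow_neg, zpow_natCast, ← inv_pow] using
    tendsto_pow_atTop_nhds_zero_of_lt_one (by norm_num : (0 : ℝ) ≤ 2⁻¹) (by norm_num)

def dyadicCenter (k : ℤ) (m : Fin n → ℤ) : Fin n → ℝ := fun i => (m i + 2⁻¹) * 2 ^ k

theorem closedBall_dyadicCenter (k : ℤ) (m : Fin n → ℤ) :
    closedBall (dyadicCenter k m) (2 ^ k / 2) =
      Set.univ.pi fun i => Set.Icc ((m i : ℝ) * 2 ^ k) ((m i + 1) * 2 ^ k) := by
  rw [closedBall_pi _ (by positivity)]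
  congr! 2 with i
  rw [Real.closedBall_eq_Icc, dyadicCenter]
  congr 1 <;> ring

theorem setLIntegral_div_closedBall_dyadicCenter (g : EuclideanSpace ℝ (Fin n) → ℝ≥0∞) (k : ℤ)
    (m : Fin n → ℤ) :
    (∫⁻ z in closedBall (dyadicCenter k m) (2 ^ k / 2), g (WithLp.toLp 2 z)) /
        volume (closedBall (dyadicCenter k m) (2 ^ k / 2)) =
      (∫⁻ y in dyadicCube k m, g y) / volume (dyadicCube k m) := by
  have hae : closedBall (dyadicCenter k m) (2 ^ k / 2) =ᵐ[volume]
      Set.univ.pi fun i => Set.Ico ((m i : ℝ) * 2 ^ k) ((m i + 1) * 2 ^ k) := by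
    rw [closedBall_dyadicCenter, Set.pi_univ_Icc]
    exact Measure.univ_pi_Ico_ae_eq_Icc.symm
  have hpres := PiLp.volume_preserving_ofLp (Fin n)
  rw [setLIntegral_congr hae, measure_congr hae, dyadicCube_eq_preimage_ofLp,
    ← hpres.setLIntegral_comp_preimage_emb (MeasurableEquiv.toLp 2 _).symm.measurableEmbedding,
    hpres.measure_preimage (MeasurableSet.univ_pi fun _ => measurableSet_Ico).nullMeasurableSet]

theorem ae_tendsto_setLIntegral_div_dyadicCube {g : EuclideanSpace ℝ (Fin n) → ℝ≥0∞}
    (hg : AEMeasurable g) (hg' : ∫⁻ y, g y ≠ ∞) :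
    ∀ᵐ x, Tendsto (fun j : ℕ => (∫⁻ y in dyadicCube (-j) (dyadicIndex (-j) x), g y) /
      volume (dyadicCube (-j) (dyadicIndex (-j) x))) atTop (𝓝 (g x)) := by
  have hpres := PiLp.volume_preserving_toLp (Fin n)
  have hG := (IsUnifLocDoublingMeasure.vitaliFamily (volume : Measure (Fin n → ℝ)) 1)
    |>.ae_tendsto_lintegral_div (hg.comp_quasiMeasurePreserving hpres.quasiMeasurePreserving)
      (by rwa [Function.comp_def,
        hpres.lintegral_comp_emb (MeasurableEquiv.toLp 2 _).measurableEmbedding])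
  filter_upwards [(PiLp.volume_preserving_ofLp (Fin n)).quasiMeasurePreserving.ae hG] with x hx
  have hδ : Tendsto (fun j : ℕ => (2 : ℝ) ^ (-(j : ℤ)) / 2) atTop (𝓝[>] 0) :=
    tendsto_nhdsWithin_iff.2 ⟨by simpa using tendsto_two_zpow_neg_natCast.div_const 2,
      .of_forall fun j => Set.mem_Ioi.2 (by positivity)⟩
  have hmem (j : ℕ) : WithLp.ofLp x ∈
      closedBall (dyadicCenter (-j) (dyadicIndex (-j) x)) (1 * (2 ^ (-(j : ℤ)) / 2)) := by
    rw [one_mul, closedBall_dyadicCenter]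
    exact fun i _ => Set.Ico_subset_Icc_self (mem_dyadicCube_dyadicIndex (-j) x i)
  simpa only [Function.comp_def, setLIntegral_div_closedBall_dyadicCenter] using
    hx.comp (IsUnifLocDoublingMeasure.tendsto_closedBall_filterAt volume _ _ hδ (.of_forall hmem))

end Dyadic

section CalderonZygmund

variable {n : ℕ} {ρ : EuclideanSpace ℝ (Fin n) → ℝ} {θ : ℝ} {f : EuclideanSpace ℝ (Fin n) → ℝ}

theorem one_le_psiD (hρ : ∀ x, 0 ≤ ρ x) (hθ : 0 ≤ θ) (k : ℤ) (m : Fin n → ℤ) :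
    1 ≤ psiD ρ θ k m := by
  have : 0 ≤ (2 : ℝ) ^ k / sSup (ρ '' dyadicCube k m) :=
    div_nonneg (by positivity) (Real.sSup_nonneg (by simp [hρ]))
  exact Real.one_le_rpow (by linarith) hθ

theorem psiD_le_of_mem (hρ : ∀ x, 0 < ρ x) (hθ : 0 ≤ θ) {k : ℤ} {m : Fin n → ℤ}
    {x : EuclideanSpace ℝ (Fin n)} (hx : x ∈ dyadicCube k m) :
    psiD ρ θ k m ≤ (1 + 2 ^ k / ρ x) ^ θ := by
  have hsup : 0 ≤ sSup (ρ '' dyadicCube k m) := Real.sSup_nonneg (by simp [(hρ _).le])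
  refine Real.rpow_le_rpow (by positivity) (add_le_add_right ?_ 1) hθ
  by_cases hb : BddAbove (ρ '' dyadicCube k m)
  · exact div_le_div_of_nonneg_left (by positivity) (hρ x) (le_csSup hb ⟨x, hx, rfl⟩)
  · rw [Real.sSup_of_not_bddAbove hb, _root_.div_zero]
    exact div_nonneg (by positivity) (hρ x).le

theorem tendsto_psiD_dyadicIndex (hρ : ∀ x, 0 < ρ x) (hθ : 0 ≤ θ)
    (x : EuclideanSpace ℝ (Fin n)) :
    Tendsto (fun j : ℕ => psiD ρ θ (-j) (dyadicIndex (-j) x)) atTop (𝓝 1) := by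
  have hbound : Tendsto (fun j : ℕ => (1 + (2 : ℝ) ^ (-(j : ℤ)) / ρ x) ^ θ) atTop (𝓝 1) := by
    simpa using
      ((tendsto_two_zpow_neg_natCast.div_const (ρ x)).const_add 1).rpow_const (.inr hθ)
  exact tendsto_of_tendsto_of_tendsto_of_le_of_le tendsto_const_nhds hbound
    (fun j => one_le_psiD (fun y => (hρ y).le) hθ _ _)
    (fun j => psiD_le_of_mem hρ hθ (mem_dyadicCube_dyadicIndex _ x))

def psiVolume (ρ : EuclideanSpace ℝ (Fin n) → ℝ) (θ : ℝ) (k : ℤ) (m : Fin n → ℤ) : ℝ≥0∞ :=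
  ENNReal.ofReal (psiD ρ θ k m) * volume (dyadicCube k m)

theorem volume_le_psiVolume (hρ : ∀ x, 0 ≤ ρ x) (hθ : 0 ≤ θ) (k : ℤ) (m : Fin n → ℤ) :
    volume (dyadicCube k m) ≤ psiVolume ρ θ k m :=
  le_mul_of_one_le_left' (ENNReal.one_le_ofReal.mpr (one_le_psiD hρ hθ k m))

theorem psiVolume_ne_top (k : ℤ) (m : Fin n → ℤ) : psiVolume ρ θ k m ≠ ∞ :=
  ENNReal.mul_ne_top ENNReal.ofReal_ne_top (volume_dyadicCube_ne_top k m)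

theorem avgD_le_iff (hρ : ∀ x, 0 ≤ ρ x) (hθ : 0 ≤ θ) {k : ℤ} {m : Fin n → ℤ} {c : ℝ≥0∞} :
    avgD ρ θ k m f ≤ c ↔
      ∫⁻ y in dyadicCube k m, ENNReal.ofReal (f y) ≤ psiVolume ρ θ k m * c :=
  ENNReal.inv_mul_le_iff
    (ne_bot_of_le_ne_bot (volume_dyadicCube_ne_zero k m) (volume_le_psiVolume hρ hθ k m))
    (psiVolume_ne_top k m)

theorem lt_avgD_iff (hρ : ∀ x, 0 ≤ ρ x) (hθ : 0 ≤ θ) {k : ℤ} {m : Fin n → ℤ} {c : ℝ≥0∞} :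
    c < avgD ρ θ k m f ↔
      psiVolume ρ θ k m * c < ∫⁻ y in dyadicCube k m, ENNReal.ofReal (f y) := by
  simpa only [not_le] using (avgD_le_iff hρ hθ).not

theorem avgD_le_MDyadic {k : ℤ} {m : Fin n → ℤ} {x : EuclideanSpace ℝ (Fin n)}
    (hx : x ∈ dyadicCube k m) : avgD ρ θ k m f ≤ MDyadic ρ θ f x :=
  le_iSup₂_of_le k m (le_iSup_of_le hx le_rfl)

theorem volume_le_of_lt_avgD (hρ : ∀ x, 0 ≤ ρ x) (hθ : 0 ≤ θ) {k : ℤ} {m : Fin n → ℤ}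
    {c : ℝ≥0∞} (hc : c ≠ 0) (h : c < avgD ρ θ k m f) :
    volume (dyadicCube k m) ≤ c⁻¹ * ∫⁻ y in dyadicCube k m, ENNReal.ofReal (f y) := by
  rw [← ENNReal.mul_le_iff_le_inv hc h.ne_top, mul_comm]
  calc volume (dyadicCube k m) * c ≤ psiVolume ρ θ k m * c := by
        grw [volume_le_psiVolume hρ hθ k m]
    _ ≤ _ := ((lt_avgD_iff hρ hθ).mp h).le

theorem eventually_avgD_le (hn : 0 < n) (hρ : ∀ x, 0 ≤ ρ x) (hθ : 0 ≤ θ)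
    (hf : ∫⁻ y, ENNReal.ofReal (f y) ≠ ∞) {c : ℝ≥0∞} (hc : c ≠ 0) :
    ∀ᶠ k in atTop, ∀ m, avgD ρ θ k m f ≤ c := by
  have hpow : Tendsto (fun k : ℤ => (2 : ℝ) ^ k) atTop atTop := by
    refine tendsto_atTop_atTop.2 fun b => ?_
    obtain ⟨N, hN⟩ := pow_unbounded_of_one_lt b one_lt_two
    exact ⟨N, fun k hk => hN.le.trans (by simpa using zpow_le_zpow_right₀ one_le_two hk)⟩
  filter_upwards [eventually_ge_atTop 0, (ENNReal.tendsto_ofReal_atTop.comp hpow)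
    |>.eventually_const_lt (ENNReal.div_lt_top hf hc)] with k hk₀ hk m
  have hside : 1 ≤ ENNReal.ofReal (2 ^ k) :=
    ENNReal.one_le_ofReal.mpr (one_le_zpow₀ one_le_two hk₀)
  rw [avgD_le_iff hρ hθ]
  calc ∫⁻ y in dyadicCube k m, ENNReal.ofReal (f y)
      ≤ ∫⁻ y, ENNReal.ofReal (f y) := setLIntegral_le_lintegral _ _
    _ ≤ ENNReal.ofReal (2 ^ k) * c :=
        (ENNReal.div_le_iff_le_mul (.inl hc) (.inr (zero_lt_one.trans_le hside).ne')).mp hk.le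
    _ ≤ volume (dyadicCube k m) * c := by
        rw [volume_dyadicCube]; gcongr; exact le_self_pow₀ hside hn.ne'
    _ ≤ _ := by grw [volume_le_psiVolume hρ hθ k m]

theorem ae_ofReal_le_of_MDyadic_le (hρ : ∀ x, 0 < ρ x) (hθ : 0 ≤ θ) (hf : Integrable f)
    (c : ℝ≥0∞) : ∀ᵐ x, MDyadic ρ θ f x ≤ c → ENNReal.ofReal (f x) ≤ c := by
  filter_upwards [ae_tendsto_setLIntegral_div_dyadicCube hf.1.aemeasurable.ennreal_ofReal
    hf.lintegral_lt_top.ne] with x hx hM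
  have hbound (j : ℕ) : (∫⁻ y in dyadicCube (-j) (dyadicIndex (-j) x), ENNReal.ofReal (f y)) /
      volume (dyadicCube (-j) (dyadicIndex (-j) x))
        ≤ ENNReal.ofReal (psiD ρ θ (-j) (dyadicIndex (-j) x)) * c := by
    rw [ENNReal.div_le_iff (volume_dyadicCube_ne_zero _ _) (volume_dyadicCube_ne_top _ _),
      mul_right_comm]
    exact (avgD_le_iff (fun y => (hρ y).le) hθ).mp
      ((avgD_le_MDyadic (mem_dyadicCube_dyadicIndex _ x)).trans hM)
  have hlim : Tendsto (fun j : ℕ => ENNReal.ofReal (psiD ρ θ (-j) (dyadicIndex (-j) x)) * c)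
      atTop (𝓝 c) := by
    simpa using ENNReal.Tendsto.mul_const
      (ENNReal.tendsto_ofReal (tendsto_psiD_dyadicIndex hρ hθ x)) (.inl (by simp))
  exact le_of_tendsto_of_tendsto' hx hlim hbound

def maximalDyadicCubes (ρ : EuclideanSpace ℝ (Fin n) → ℝ) (θ : ℝ)
    (f : EuclideanSpace ℝ (Fin n) → ℝ) (c : ℝ≥0∞) : Set (ℤ × (Fin n → ℤ)) :=
  {j | c < avgD ρ θ j.1 j.2 f ∧
    ∀ l m', j.1 < l → dyadicCube j.1 j.2 ⊆ dyadicCube l m' → avgD ρ θ l m' f ≤ c}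

theorem eq_of_mem_maximalDyadicCubes {c : ℝ≥0∞} {j j' : ℤ × (Fin n → ℤ)}
    (hj : j ∈ maximalDyadicCubes ρ θ f c) (hj' : j' ∈ maximalDyadicCubes ρ θ f c)
    (hle : j.1 ≤ j'.1) {x : EuclideanSpace ℝ (Fin n)} (hx : x ∈ dyadicCube j.1 j.2)
    (hx' : x ∈ dyadicCube j'.1 j'.2) : j = j' := by
  rcases hle.lt_or_eq with hlt | heq
  · exact absurd (hj.2 _ _ hlt (dyadicCube_subset_of_le hle hx hx')) hj'.1.not_ge
  · rw [mem_dyadicCube_iff] at hx hx'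
    exact Prod.ext heq (hx.symm.trans (heq ▸ hx'))

theorem maximalDyadicCubes_pairwise_disjoint (c : ℝ≥0∞) :
    (maximalDyadicCubes ρ θ f c).Pairwise
      fun j j' => Disjoint (dyadicCube j.1 j.2) (dyadicCube j'.1 j'.2) := by
  intro j hj j' hj' hne
  refine Set.disjoint_left.2 fun x hx hx' => hne ?_
  rcases le_total j.1 j'.1 with hle | hle
  · exact eq_of_mem_maximalDyadicCubes hj hj' hle hx hx'
  · exact (eq_of_mem_maximalDyadicCubes hj' hj hle hx' hx).symm

theorem setOf_lt_MDyadic_eq_biUnion_maximalDyadicCubes {c : ℝ≥0∞}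
    (hlarge : ∀ᶠ k in atTop, ∀ m, avgD ρ θ k m f ≤ c) :
    {x | c < MDyadic ρ θ f x} = ⋃ j ∈ maximalDyadicCubes ρ θ f c, dyadicCube j.1 j.2 := by
  ext x
  simp only [Set.mem_ofPred_eq, Set.mem_iUnion, exists_prop]
  constructor
  · intro hx
    obtain ⟨k, m, hxk, hk⟩ : ∃ k m, x ∈ dyadicCube k m ∧ c < avgD ρ θ k m f := by
      simpa only [MDyadic, lt_iSup_iff, exists_prop] using hx
    obtain ⟨K, hK⟩ := eventually_atTop.mp hlarge
    obtain ⟨k₀, hk₀, hmax⟩ := Int.exists_greatest_of_bdd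
      (P := fun l => c < avgD ρ θ l (dyadicIndex l x) f)
      ⟨K, fun l hl => le_of_not_gt fun hKl => (hK l hKl.le _).not_gt hl⟩
      ⟨k, mem_dyadicCube_iff.mp hxk ▸ hk⟩
    refine ⟨(k₀, dyadicIndex k₀ x), ⟨hk₀, fun l m' hl hsub => ?_⟩,
      mem_dyadicCube_dyadicIndex k₀ x⟩
    rw [← mem_dyadicCube_iff.mp (hsub (mem_dyadicCube_dyadicIndex k₀ x))]
    exact le_of_not_gt fun h => (hmax l h).not_gt hl
  · rintro ⟨j, hj, hx⟩
    exact hj.1.trans_le (avgD_le_MDyadic hx)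

theorem avgD_le_of_mem_maximalDyadicCubes (hρ : ∀ x, 0 ≤ ρ x) (hθ : 0 ≤ θ) {c C : ℝ≥0∞}
    {j : ℤ × (Fin n → ℤ)} (hj : j ∈ maximalDyadicCubes ρ θ f c)
    (hparent : ∀ m', dyadicCube j.1 j.2 ⊆ dyadicCube (j.1 + 1) m' →
      psiVolume ρ θ (j.1 + 1) m' ≤ C * psiVolume ρ θ j.1 j.2) :
    avgD ρ θ j.1 j.2 f ≤ C * c := by
  obtain ⟨m', hsub⟩ := exists_dyadicCube_parent j.1 j.2
  rw [avgD_le_iff hρ hθ]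
  calc ∫⁻ y in dyadicCube j.1 j.2, ENNReal.ofReal (f y)
      ≤ ∫⁻ y in dyadicCube (j.1 + 1) m', ENNReal.ofReal (f y) := lintegral_mono_set hsub
    _ ≤ psiVolume ρ θ (j.1 + 1) m' * c := (avgD_le_iff hρ hθ).mp (hj.2 _ _ (lt_add_one _) hsub)
    _ ≤ C * psiVolume ρ θ j.1 j.2 * c := by grw [hparent m' hsub]
    _ = psiVolume ρ θ j.1 j.2 * (C * c) := by ring

theorem volume_biUnion_maximalDyadicCubes_le (hρ : ∀ x, 0 ≤ ρ x) (hθ : 0 ≤ θ) {c : ℝ≥0∞}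
    (hc : c ≠ 0) :
    volume (⋃ j ∈ maximalDyadicCubes ρ θ f c, dyadicCube j.1 j.2)
      ≤ c⁻¹ * ∫⁻ y, ENNReal.ofReal (f y) := by
  set S := maximalDyadicCubes ρ θ f c
  have hmeas : ∀ j ∈ S, MeasurableSet (dyadicCube j.1 j.2) :=
    fun j _ => measurableSet_dyadicCube _ _
  rw [measure_biUnion S.to_countable (maximalDyadicCubes_pairwise_disjoint c) hmeas]
  calc ∑' j : S, volume (dyadicCube j.1.1 j.1.2)
      ≤ ∑' j : S, c⁻¹ * ∫⁻ y in dyadicCube j.1.1 j.1.2, ENNReal.ofReal (f y) :=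
        ENNReal.tsum_le_tsum fun j => volume_le_of_lt_avgD hρ hθ hc j.2.1
    _ = c⁻¹ * ∫⁻ y in ⋃ j ∈ S, dyadicCube j.1 j.2, ENNReal.ofReal (f y) := by
        rw [ENNReal.tsum_mul_left,
          lintegral_biUnion S.to_countable hmeas (maximalDyadicCubes_pairwise_disjoint c)]
    _ ≤ c⁻¹ * ∫⁻ y, ENNReal.ofReal (f y) := by grw [setLIntegral_le_lintegral]

end CalderonZygmund

/-- Calderón–Zygmund decomposition for `M^Δ_{V,θ}`. -/
theorem stmt9 {n : ℕ} (hn : 0 < n) (ρ : EuclideanSpace ℝ (Fin n) → ℝ) (hρ : ∀ x, 0 < ρ x)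
    (θ lam : ℝ) (hθ : 0 < θ) (hlam : 0 < lam)
    (hconsist : ∀ (k : ℤ) (m m' : Fin n → ℤ),
      dyadicCube k m ⊆ dyadicCube (k + 1) m' →
        ENNReal.ofReal (psiD ρ θ (k + 1) m') * volume (dyadicCube (k + 1) m' :
            Set (EuclideanSpace ℝ (Fin n)))
          ≤ ENNReal.ofReal ((4 * n) ^ θ * 2 ^ n) *
            (ENNReal.ofReal (psiD ρ θ k m) * volume (dyadicCube k m)))
    (f : EuclideanSpace ℝ (Fin n) → ℝ) (hf0 : ∀ x, 0 ≤ f x) (hf : Integrable f volume) :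
    ∃ S : Set (ℤ × (Fin n → ℤ)),
      (S.Pairwise fun j j' => Disjoint (dyadicCube j.1 j.2) (dyadicCube j'.1 j'.2)) ∧
      ({x | ENNReal.ofReal lam < MDyadic ρ θ f x} = ⋃ j ∈ S, dyadicCube j.1 j.2) ∧
      (∀ j ∈ S, ENNReal.ofReal lam < avgD ρ θ j.1 j.2 f ∧
        avgD ρ θ j.1 j.2 f ≤ ENNReal.ofReal ((4 * n) ^ θ * 2 ^ n * lam)) ∧
      (∀ᵐ x, x ∉ (⋃ j ∈ S, dyadicCube j.1 j.2) → f x ≤ lam) ∧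
      volume {x | ENNReal.ofReal lam < MDyadic ρ θ f x}
        ≤ ENNReal.ofReal (lam⁻¹ * ∫ x, f x) := by
  have hρ' : ∀ x, 0 ≤ ρ x := fun x => (hρ x).le
  have hlam' : ENNReal.ofReal lam ≠ 0 := (ENNReal.ofReal_pos.2 hlam).ne'
  have hcover := setOf_lt_MDyadic_eq_biUnion_maximalDyadicCubes
    (eventually_avgD_le hn hρ' hθ.le hf.lintegral_lt_top.ne hlam')
  refine ⟨maximalDyadicCubes ρ θ f (ENNReal.ofReal lam), maximalDyadicCubes_pairwise_disjoint _,
    hcover, fun j hj => ⟨hj.1, ?_⟩, ?_, ?_⟩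
  · rw [ENNReal.ofReal_mul (by positivity)]
    exact avgD_le_of_mem_maximalDyadicCubes hρ' hθ.le hj (hconsist j.1 j.2)
  · filter_upwards [ae_ofReal_le_of_MDyadic_le hρ hθ.le hf (ENNReal.ofReal lam)] with x hx hxS
    rw [← hcover] at hxS
    exact (ENNReal.ofReal_le_ofReal_iff hlam.le).mp (hx (not_lt.mp hxS))
  · rw [hcover, ENNReal.ofReal_mul (by positivity), ENNReal.ofReal_inv_of_pos hlam,
      ofReal_integral_eq_lintegral_ofReal hf (ae_of_all _ hf0)]
    exact volume_biUnion_maximalDyadicCubes_le hρ' hθ.le hlam'
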